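/- arXiv:2301.09433 — 2 statements merged into one kernel-verified Lean document; each statement's English description precedes it below -/
import Mathlib

section
/- Let n = 2·p^α with p an odd prime. Then the Wiener index of Cl₂(ZMod n) equals (17·φ(n)² − 15·φ(n) + 8)/2. -/
/-- Vertices of the clean graph `Cl₂(R)`: pairs `(e, u)` with `e` a nonzero
idempotent of `R` and `u` a unit of `R`. -/
def cleanVertex (R : Type*) [Ring R] : Type _ := {e : R // e * e = e ∧ e ≠ 0} × Rˣ

/-- The graph `Cl₂(R)`: distinct vertices `(e,u)`, `(f,v)` are adjacent iff
`ef = fe = 0` or `uv = vu = 1`. -/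
def cleanGraph (R : Type*) [Ring R] : SimpleGraph (cleanVertex R) :=
  SimpleGraph.fromRel (fun x y =>
    (x.1.1 * y.1.1 = 0 ∧ y.1.1 * x.1.1 = 0) ∨
    ((x.2 : R) * (y.2 : R) = 1 ∧ (y.2 : R) * (x.2 : R) = 1))

/-- Wiener index: sum of distances over unordered pairs of vertices. -/
noncomputable def wienerIndex {V : Type*} (G : SimpleGraph V) : ℕ :=
  (∑ᶠ x : V, ∑ᶠ y : V, G.dist x y) / 2

/-- Matching number: maximum size of a matching. -/
noncomputable def matchingNumber {V : Type*} (G : SimpleGraph V) : ℕ :=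
  sSup {k | ∃ M : G.Subgraph, M.IsMatching ∧ M.edgeSet.ncard = k}


section Master

variable {R : Type*} [CommRing R]

/-- nonzero idempotents -/
abbrev NzIdem (R : Type*) [Ring R] := {e : R // e * e = e ∧ e ≠ 0}

def mkV (e : NzIdem R) (u : Rˣ) : cleanVertex R := (e, u)

lemma mkV_fst (e : NzIdem R) (u : Rˣ) : (mkV e u).1 = e := rfl
lemma mkV_snd (e : NzIdem R) (u : Rˣ) : (mkV e u).2 = u := rfl

lemma mkV_inj {e f : NzIdem R} {u v : Rˣ} : mkV e u = mkV f v ↔ e = f ∧ u = v := by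
  constructor
  · intro h
    exact ⟨congrArg Prod.fst h, congrArg Prod.snd h⟩
  · rintro ⟨rfl, rfl⟩; rfl

lemma cleanGraph_adj (x y : cleanVertex R) :
    (cleanGraph R).Adj x y ↔ x ≠ y ∧ (x.1.1 * y.1.1 = 0 ∨ (x.2 : R) * (y.2 : R) = 1) := by
  unfold cleanGraph
  rw [SimpleGraph.fromRel_adj]
  constructor
  · rintro ⟨hne, (⟨h1,h2⟩|⟨h1,h2⟩)|(⟨h1,h2⟩|⟨h1,h2⟩)⟩ <;>
      first
      | exact ⟨hne, Or.inl h1⟩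
      | exact ⟨hne, Or.inl (by rw [mul_comm]; exact h1)⟩
      | exact ⟨hne, Or.inr h1⟩
      | exact ⟨hne, Or.inr (by rw [mul_comm]; exact h1)⟩
  · rintro ⟨hne, h|h⟩
    · exact ⟨hne, Or.inl (Or.inl ⟨h, by rw [mul_comm]; exact h⟩)⟩
    · exact ⟨hne, Or.inl (Or.inr ⟨h, by rw [mul_comm]; exact h⟩)⟩

lemma unit_mul_eq_one (u v : Rˣ) : (u : R) * (v : R) = 1 ↔ v = u⁻¹ := by
  constructor
  · intro h
    have h' : u * v = 1 := Units.ext (by simpa using h)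
    exact eq_inv_of_mul_eq_one_left (by rw [mul_comm] at h'; exact h')
  · rintro rfl; exact Units.mul_inv u

lemma adj_of_idem {e f : NzIdem R} (u v : Rˣ) (hne : e.1 ≠ f.1) (h : e.1 * f.1 = 0) :
    (cleanGraph R).Adj (mkV e u) (mkV f v) :=
  (cleanGraph_adj _ _).mpr ⟨fun hh => hne (congrArg (fun z => z.1) (mkV_inj.mp hh).1), Or.inl h⟩

lemma adj_of_unit {e f : NzIdem R} {u v : Rˣ} (hne : mkV e u ≠ mkV (R := R) f v)
    (h : (u : R) * (v : R) = 1) : (cleanGraph R).Adj (mkV e u) (mkV f v) :=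
  (cleanGraph_adj _ _).mpr ⟨hne, Or.inr h⟩

open SimpleGraph in
lemma dist_eq_two' {V : Type*} {G : SimpleGraph V} {x y : V} (hxy : x ≠ y)
    (hadj : ¬ G.Adj x y) {z : V}
    (h1 : G.Adj x z) (h2 : G.Adj z y) : G.dist x y = 2 := by
  have hle : G.dist x y ≤ 2 := by
    have := G.dist_le ((h1.toWalk.append h2.toWalk))
    simpa using this
  have h0 : G.dist x y ≠ 0 := by
    intro h
    exact hxy ((SimpleGraph.Reachable.dist_eq_zero_iff ⟨(h1.toWalk.append h2.toWalk)⟩).mp h)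
  have h1' : G.dist x y ≠ 1 := by
    intro h; exact hadj (SimpleGraph.dist_eq_one_iff_adj.mp h)
  omega

open SimpleGraph in
lemma dist_eq_three' {V : Type*} {G : SimpleGraph V} {x y : V} (hxy : x ≠ y)
    (hadj : ¬ G.Adj x y)
    (hno : ∀ z, ¬ (G.Adj x z ∧ G.Adj z y)) {a b : V}
    (h1 : G.Adj x a) (h2 : G.Adj a b) (h3 : G.Adj b y) : G.dist x y = 3 := by
  have hw : G.Walk x y := (h1.toWalk.append (h2.toWalk.append h3.toWalk))
  have hle : G.dist x y ≤ 3 := by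
    have := G.dist_le ((h1.toWalk.append (h2.toWalk.append h3.toWalk)))
    simpa using this
  have h0 : G.dist x y ≠ 0 := by
    intro h; exact hxy ((SimpleGraph.Reachable.dist_eq_zero_iff ⟨hw⟩).mp h)
  have h1' : G.dist x y ≠ 1 := by
    intro h; exact hadj (SimpleGraph.dist_eq_one_iff_adj.mp h)
  have h2' : G.dist x y ≠ 2 := by
    intro h
    obtain ⟨p, hp⟩ := SimpleGraph.Reachable.exists_walk_length_eq_dist (G := G) ⟨hw⟩
    rw [h] at hp
    match p, hp with
    | SimpleGraph.Walk.cons h (SimpleGraph.Walk.cons h' SimpleGraph.Walk.nil), _ =>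
      exact hno _ ⟨h, h'⟩
  omega

variable [DecidableEq R]

variable (E F : R) (hE : E * E = E) (hF : F * F = F) (hEF : E * F = 0)
  (hE0 : E ≠ 0) (hF0 : F ≠ 0) (hE1 : E ≠ 1) (hF1 : F ≠ 1) (hEnF : E ≠ F)
  (h10 : (1 : R) ≠ 0)

def oI (h10 : (1 : R) ≠ 0) : NzIdem R := ⟨1, by rw [one_mul], h10⟩
def eI : NzIdem R := ⟨E, hE, hE0⟩
def fI : NzIdem R := ⟨F, hF, hF0⟩

set_option linter.unusedSectionVars false

section Dists
include hE hF hEF hE0 hF0 hE1 hF1 hEnF h10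

lemma distEF (u v : Rˣ) :
    (cleanGraph R).dist (mkV (eI E hE hE0) u) (mkV (fI F hF hF0) v) = 1 :=
  SimpleGraph.dist_eq_one_iff_adj.mpr (adj_of_idem u v hEnF hEF)

lemma distFE (u v : Rˣ) :
    (cleanGraph R).dist (mkV (fI F hF hF0) u) (mkV (eI E hE hE0) v) = 1 :=
  SimpleGraph.dist_eq_one_iff_adj.mpr
    (adj_of_idem u v (Ne.symm hEnF) (by rw [mul_comm]; exact hEF))

lemma dist1E (u v : Rˣ) :
    (cleanGraph R).dist (mkV (oI h10) u) (mkV (eI E hE hE0) v)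
      = if (u : R) * (v : R) = 1 then 1 else 2 := by
  have hne : mkV (R := R) (oI h10) u ≠ mkV (eI E hE hE0) v := by
    intro h
    exact hE1 (congrArg (fun z => z.1) (mkV_inj.mp h).1).symm
  split_ifs with h
  · exact SimpleGraph.dist_eq_one_iff_adj.mpr (adj_of_unit hne h)
  · refine dist_eq_two' hne ?_ (z := mkV (fI F hF hF0) u⁻¹) ?_ ?_
    · intro hadj
      rcases ((cleanGraph_adj _ _).mp hadj).2 with h' | h'
      · rw [mkV_fst, mkV_fst] at h'
        exact hE0 (by rw [← one_mul E]; exact h')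
      · exact h h'
    · exact adj_of_unit (by intro hh; exact hF1 (congrArg (fun z => z.1) (mkV_inj.mp hh).1).symm)
        (by simp)
    · exact adj_of_idem _ _ (Ne.symm hEnF) (by rw [mul_comm]; exact hEF)

lemma dist1F (u v : Rˣ) :
    (cleanGraph R).dist (mkV (oI h10) u) (mkV (fI F hF hF0) v)
      = if (u : R) * (v : R) = 1 then 1 else 2 := by
  have hne : mkV (R := R) (oI h10) u ≠ mkV (fI F hF hF0) v := by
    intro h
    exact hF1 (congrArg (fun z => z.1) (mkV_inj.mp h).1).symm
  split_ifs with h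
  · exact SimpleGraph.dist_eq_one_iff_adj.mpr (adj_of_unit hne h)
  · refine dist_eq_two' hne ?_ (z := mkV (eI E hE hE0) u⁻¹) ?_ ?_
    · intro hadj
      rcases ((cleanGraph_adj _ _).mp hadj).2 with h' | h'
      · rw [mkV_fst, mkV_fst] at h'
        exact hF0 (by rw [← one_mul F]; exact h')
      · exact h h'
    · exact adj_of_unit (by intro hh; exact hE1 (congrArg (fun z => z.1) (mkV_inj.mp hh).1).symm)
        (by simp)
    · exact adj_of_idem _ _ hEnF hEF

lemma distE1 (u v : Rˣ) :
    (cleanGraph R).dist (mkV (eI E hE hE0) u) (mkV (oI h10) v)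
      = if (u : R) * (v : R) = 1 then 1 else 2 := by
  rw [SimpleGraph.dist_comm, dist1E E F hE hF hEF hE0 hF0 hE1 hF1 hEnF h10 v u, mul_comm]

lemma distF1 (u v : Rˣ) :
    (cleanGraph R).dist (mkV (fI F hF hF0) u) (mkV (oI h10) v)
      = if (u : R) * (v : R) = 1 then 1 else 2 := by
  rw [SimpleGraph.dist_comm, dist1F E F hE hF hEF hE0 hF0 hE1 hF1 hEnF h10 v u, mul_comm]

lemma distEE (u v : Rˣ) :
    (cleanGraph R).dist (mkV (eI E hE hE0) u) (mkV (eI E hE hE0) v)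
      = if u = v then 0 else if (u : R) * (v : R) = 1 then 1 else 2 := by
  split_ifs with h h2
  · subst h; exact SimpleGraph.dist_self
  · refine SimpleGraph.dist_eq_one_iff_adj.mpr (adj_of_unit ?_ h2)
    intro hh; exact h (mkV_inj.mp hh).2
  · have hne : mkV (R := R) (eI E hE hE0) u ≠ mkV (eI E hE hE0) v := by
      intro hh; exact h (mkV_inj.mp hh).2
    refine dist_eq_two' hne ?_ (z := mkV (fI F hF hF0) 1) ?_ ?_
    · intro hadj
      rcases ((cleanGraph_adj _ _).mp hadj).2 with h' | h'
      · rw [mkV_fst, mkV_fst] at h'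
        simp only [eI] at h'
        rw [hE] at h'
        exact hE0 h'
      · exact h2 h'
    · exact adj_of_idem _ _ hEnF hEF
    · exact adj_of_idem _ _ (Ne.symm hEnF) (by rw [mul_comm]; exact hEF)

lemma distFF (u v : Rˣ) :
    (cleanGraph R).dist (mkV (fI F hF hF0) u) (mkV (fI F hF hF0) v)
      = if u = v then 0 else if (u : R) * (v : R) = 1 then 1 else 2 := by
  split_ifs with h h2
  · subst h; exact SimpleGraph.dist_self
  · refine SimpleGraph.dist_eq_one_iff_adj.mpr (adj_of_unit ?_ h2)
    intro hh; exact h (mkV_inj.mp hh).2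
  · have hne : mkV (R := R) (fI F hF hF0) u ≠ mkV (fI F hF hF0) v := by
      intro hh; exact h (mkV_inj.mp hh).2
    refine dist_eq_two' hne ?_ (z := mkV (eI E hE hE0) 1) ?_ ?_
    · intro hadj
      rcases ((cleanGraph_adj _ _).mp hadj).2 with h' | h'
      · rw [mkV_fst, mkV_fst] at h'
        simp only [fI] at h'
        rw [hF] at h'
        exact hF0 h'
      · exact h2 h'
    · exact adj_of_idem _ _ (Ne.symm hEnF) (by rw [mul_comm]; exact hEF)
    · exact adj_of_idem _ _ hEnF hEF

lemma dist11 (u v : Rˣ) :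
    (cleanGraph R).dist (mkV (oI h10) u) (mkV (oI h10) v)
      = if u = v then 0 else if (u : R) * (v : R) = 1 then 1 else 3 := by
  split_ifs with h h2
  · subst h; exact SimpleGraph.dist_self
  · refine SimpleGraph.dist_eq_one_iff_adj.mpr (adj_of_unit ?_ h2)
    intro hh; exact h (mkV_inj.mp hh).2
  · have hne : mkV (R := R) (oI h10) u ≠ mkV (oI h10) v := by
      intro hh; exact h (mkV_inj.mp hh).2
    refine dist_eq_three' hne ?_ ?_
      (a := mkV (eI E hE hE0) u⁻¹) (b := mkV (fI F hF hF0) v⁻¹) ?_ ?_ ?_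
    · intro hadj
      rcases ((cleanGraph_adj _ _).mp hadj).2 with h' | h'
      · rw [mkV_fst, mkV_fst] at h'
        simp only [oI, one_mul] at h'
        exact h10 h'
      · exact h2 h'
    · rintro ⟨z1, z2⟩ ⟨ha, hb⟩
      have h1 : (u : R) * (z2 : R) = 1 := by
        rcases ((cleanGraph_adj _ _).mp ha).2 with h' | h'
        · exfalso
          rw [mkV_fst] at h'
          simp only [oI, one_mul] at h'
          exact z1.2.2 h'
        · exact h'
      have h2' : (z2 : R) * (v : R) = 1 := by
        rcases ((cleanGraph_adj _ _).mp hb).2 with h' | h'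
        · exfalso
          rw [mkV_fst] at h'
          simp only [oI, mul_one] at h'
          exact z1.2.2 h'
        · exact h'
      have : u = v := by
        have e1 : z2 = u⁻¹ := (unit_mul_eq_one u z2).mp h1
        have e2 : v = z2⁻¹ := (unit_mul_eq_one z2 v).mp h2'
        rw [e2, e1, inv_inv]
      exact h this
    · exact adj_of_unit
        (by intro hh; exact hE1 (congrArg (fun z => z.1) (mkV_inj.mp hh).1).symm) (by simp)
    · exact adj_of_idem _ _ hEnF hEF
    · exact adj_of_unit
        (by intro hh; exact hF1 (congrArg (fun z => z.1) (mkV_inj.mp hh).1)) (by simp)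

end Dists

section Sums
variable [Fintype R]

instance : Fintype (cleanVertex R) := inferInstanceAs (Fintype (NzIdem R × Rˣ))

lemma sumA (a b : ℕ) :
    ∑ u : Rˣ, ∑ v : Rˣ, (if (u : R) * (v : R) = 1 then a else b)
      = Fintype.card Rˣ * a + (Fintype.card Rˣ * Fintype.card Rˣ - Fintype.card Rˣ) * b := by
  set m := Fintype.card Rˣ with hm
  have inner : ∀ u : Rˣ, ∑ v : Rˣ, (if (u : R) * (v : R) = 1 then a else b) = a + (m-1)*b := by
    intro u
    have : ∀ v : Rˣ, (if (u : R) * (v : R) = 1 then a else b) = if v = u⁻¹ then a else b := by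
      intro v; simp [unit_mul_eq_one]
    rw [Finset.sum_congr rfl (fun v _ => this v)]
    rw [← Finset.add_sum_erase _ _ (Finset.mem_univ u⁻¹)]
    simp only [if_pos rfl]
    congr 1
    rw [Finset.sum_congr rfl (fun v hv => if_neg (Finset.ne_of_mem_erase hv))]
    rw [Finset.sum_const, Finset.card_erase_of_mem (Finset.mem_univ _)]
    simp [hm, mul_comm]
  rw [Finset.sum_congr rfl (fun u _ => inner u), Finset.sum_const]
  simp only [Finset.card_univ, smul_eq_mul, ← hm]
  have key : m * m - m = m * (m - 1) := by
    cases m with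
    | zero => rfl
    | succ n =>
        rw [Nat.succ_sub_one, show (n+1)*(n+1) = (n+1)*n + (n+1) from by ring,
          Nat.add_sub_cancel]
  rw [key, Nat.mul_add, mul_assoc]

lemma sumB (hsq : ∀ u : Rˣ, (u:R)*(u:R) = 1 → (u:R) = 1 ∨ (u:R) = -1)
    (hne : (-1:R) ≠ 1) (c : ℕ) :
    ∑ u : Rˣ, ∑ v : Rˣ, (if u = v then 0 else if (u : R) * (v : R) = 1 then 1 else c)
      = 2*((Fintype.card Rˣ - 1)*c)
        + (Fintype.card Rˣ - 2)*(1 + (Fintype.card Rˣ - 2)*c) := by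
  classical
  set m := Fintype.card Rˣ with hm
  have hrw : ∀ u v : Rˣ, (if u = v then 0 else if (u : R) * (v : R) = 1 then 1 else c)
      = (if u = v then 0 else if v = u⁻¹ then 1 else c) := by
    intro u v; simp [unit_mul_eq_one]
  have hinner : ∀ u : Rˣ, (∑ v : Rˣ, if u = v then 0 else if v = u⁻¹ then 1 else c)
      = if u⁻¹ = u then (m-1)*c else 1 + (m-2)*c := by
    intro u
    by_cases h : u⁻¹ = u
    · rw [if_pos h]
      rw [← Finset.add_sum_erase _ _ (Finset.mem_univ u), if_pos rfl, zero_add]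
      rw [Finset.sum_congr rfl (fun v hv => ?_), Finset.sum_const,
        Finset.card_erase_of_mem (Finset.mem_univ _), Finset.card_univ, smul_eq_mul, ← hm]
      have hvu : v ≠ u := Finset.ne_of_mem_erase hv
      rw [if_neg (fun hh : u = v => hvu hh.symm), if_neg (by rw [h]; exact hvu)]
    · rw [if_neg h]
      rw [← Finset.add_sum_erase _ _ (Finset.mem_univ u), if_pos rfl, zero_add]
      have hmem : u⁻¹ ∈ Finset.univ.erase u := Finset.mem_erase.mpr ⟨h, Finset.mem_univ _⟩
      rw [← Finset.add_sum_erase _ _ hmem]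
      have hu : ¬ (u = u⁻¹) := fun hh => h hh.symm
      rw [if_neg hu, if_pos rfl]
      rw [Finset.sum_congr rfl (fun v hv => ?_), Finset.sum_const,
        Finset.card_erase_of_mem hmem, Finset.card_erase_of_mem (Finset.mem_univ _),
        Finset.card_univ, smul_eq_mul, ← hm]
      · rfl
      · have hv1 : v ≠ u⁻¹ := Finset.ne_of_mem_erase hv
        have hv2 : v ≠ u := Finset.ne_of_mem_erase (Finset.mem_of_mem_erase hv)
        rw [if_neg (fun hh : u = v => hv2 hh.symm), if_neg hv1]
  have hfilter : Finset.univ.filter (fun u : Rˣ => u⁻¹ = u) = {1, -1} := by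
    ext u
    simp only [Finset.mem_filter, Finset.mem_univ, true_and, Finset.mem_insert,
      Finset.mem_singleton]
    constructor
    · intro h
      have h2 : (u:R)*(u:R) = 1 := (unit_mul_eq_one u u).mpr h.symm
      rcases hsq u h2 with h3 | h3
      · exact Or.inl (Units.ext (by simpa using h3))
      · exact Or.inr (Units.ext (by simpa using h3))
    · rintro (rfl | rfl) <;> simp
  have hcard : (Finset.univ.filter (fun u : Rˣ => u⁻¹ = u)).card = 2 := by
    rw [hfilter]
    rw [Finset.card_insert_of_notMem, Finset.card_singleton]
    simp only [Finset.mem_singleton]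
    intro h
    exact hne (by simpa using congrArg (Units.val) h.symm)
  calc ∑ u : Rˣ, ∑ v : Rˣ, (if u = v then 0 else if (u : R) * (v : R) = 1 then 1 else c)
      = ∑ u : Rˣ, (if u⁻¹ = u then (m-1)*c else 1 + (m-2)*c) := by
        refine Finset.sum_congr rfl (fun u _ => ?_)
        rw [Finset.sum_congr rfl (fun v _ => hrw u v), hinner u]
    _ = 2*((m-1)*c) + (m-2)*(1 + (m-2)*c) := by
        rw [Finset.sum_ite, Finset.sum_const, Finset.sum_const, hcard]
        have : (Finset.univ.filter (fun u : Rˣ => ¬ u⁻¹ = u)).card = m - 2 := by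
          have := Finset.card_filter_add_card_filter_not
            (s := (Finset.univ : Finset Rˣ)) (p := fun u : Rˣ => u⁻¹ = u)
          rw [hcard, Finset.card_univ, ← hm] at this
          omega
        rw [this]; simp [smul_eq_mul]

lemma univ_nzidem (hidem : ∀ e : R, e * e = e → e = 0 ∨ e = 1 ∨ e = E ∨ e = F) :
    (Finset.univ : Finset (NzIdem R))
      = {oI h10, eI E hE hE0, fI F hF hF0} := by
  ext e
  simp only [Finset.mem_univ, true_iff, Finset.mem_insert, Finset.mem_singleton]
  obtain ⟨x, hx, hx0⟩ := e
  rcases hidem x hx with h|h|h|h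
  · exact absurd h hx0
  · exact Or.inl (Subtype.ext h)
  · exact Or.inr (Or.inl (Subtype.ext h))
  · exact Or.inr (Or.inr (Subtype.ext h))

include hE hF hEF hE0 hF0 hE1 hF1 hEnF h10 in
lemma masterSum (hidem : ∀ e : R, e * e = e → e = 0 ∨ e = 1 ∨ e = E ∨ e = F)
    (hsq : ∀ u : Rˣ, (u:R)*(u:R) = 1 → (u:R) = 1 ∨ (u:R) = -1)
    (hne : (-1:R) ≠ 1) :
    ∑ᶠ x : cleanVertex R, ∑ᶠ y : cleanVertex R, (cleanGraph R).dist x y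
      = 17 * (Fintype.card Rˣ * Fintype.card Rˣ) - 15 * Fintype.card Rˣ + 8 := by
  classical
  simp only [finsum_eq_sum_of_fintype]
  set m := Fintype.card Rˣ with hm
  set o := oI (R := R) h10
  set e := eI E hE hE0
  set f := fI F hF hF0
  have hoe : o ≠ e := fun h => hE1 (congrArg Subtype.val h).symm
  have hof : o ≠ f := fun h => hF1 (congrArg Subtype.val h).symm
  have hef : e ≠ f := fun h => hEnF (congrArg Subtype.val h)
  have step1 : ∑ x : cleanVertex R, ∑ y : cleanVertex R, (cleanGraph R).dist x y
      = ∑ i : NzIdem R, ∑ j : NzIdem R, ∑ u : Rˣ, ∑ v : Rˣ,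
          (cleanGraph R).dist (mkV i u) (mkV j v) := by
    rw [show (∑ x : cleanVertex R, ∑ y : cleanVertex R, (cleanGraph R).dist x y)
        = ∑ x : NzIdem R × Rˣ, ∑ y : NzIdem R × Rˣ, (cleanGraph R).dist x y from rfl]
    rw [Fintype.sum_prod_type]
    refine Finset.sum_congr rfl (fun i _ => ?_)
    show (∑ u : Rˣ, ∑ y : NzIdem R × Rˣ, (cleanGraph R).dist (mkV i u) y) = _
    have hin : ∀ u : Rˣ, ∑ y : NzIdem R × Rˣ, (cleanGraph R).dist (mkV i u) y
        = ∑ j : NzIdem R, ∑ v : Rˣ, (cleanGraph R).dist (mkV i u) (mkV j v) :=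
      fun u => Fintype.sum_prod_type _
    rw [Finset.sum_congr rfl (fun u _ => hin u), Finset.sum_comm]
  rw [step1]
  have huniv := univ_nzidem E F hE hF hE0 hF0 h10 hidem
  have hnm1 : o ∉ ({e, f} : Finset (NzIdem R)) := by
    simp [hoe, hof]
  have hnm2 : e ∉ ({f} : Finset (NzIdem R)) := by simp [hef]
  have expand : ∀ g : NzIdem R → ℕ, ∑ i : NzIdem R, g i = g o + (g e + g f) := by
    intro g
    rw [show (Finset.univ : Finset (NzIdem R)) = {o, e, f} from huniv,
      Finset.sum_insert hnm1, Finset.sum_insert hnm2, Finset.sum_singleton]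
  set S : NzIdem R → NzIdem R → ℕ :=
    fun i j => ∑ u : Rˣ, ∑ v : Rˣ, (cleanGraph R).dist (mkV i u) (mkV j v) with hS
  rw [show (∑ i : NzIdem R, ∑ j : NzIdem R, ∑ u : Rˣ, ∑ v : Rˣ,
      (cleanGraph R).dist (mkV i u) (mkV j v)) = ∑ i : NzIdem R, ∑ j : NzIdem R, S i j from rfl]
  rw [expand (fun i => ∑ j : NzIdem R, S i j), expand (S o), expand (S e), expand (S f)]
  have gEF : S e f = m * m := by
    rw [hS]
    simp only [o, e, f, distEF E F hE hF hEF hE0 hF0 hE1 hF1 hEnF h10]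
    simp [hm, mul_comm]
  have gFE : S f e = m * m := by
    rw [hS]
    simp only [o, e, f, distFE E F hE hF hEF hE0 hF0 hE1 hF1 hEnF h10]
    simp [hm, mul_comm]
  have g1E : S o e = m * 1 + (m*m - m) * 2 := by
    rw [hS]
    simp only [o, e, f, dist1E E F hE hF hEF hE0 hF0 hE1 hF1 hEnF h10]
    exact sumA 1 2
  have g1F : S o f = m * 1 + (m*m - m) * 2 := by
    rw [hS]
    simp only [o, e, f, dist1F E F hE hF hEF hE0 hF0 hE1 hF1 hEnF h10]
    exact sumA 1 2
  have gE1 : S e o = m * 1 + (m*m - m) * 2 := by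
    rw [hS]
    simp only [o, e, f, distE1 E F hE hF hEF hE0 hF0 hE1 hF1 hEnF h10]
    exact sumA 1 2
  have gF1 : S f o = m * 1 + (m*m - m) * 2 := by
    rw [hS]
    simp only [o, e, f, distF1 E F hE hF hEF hE0 hF0 hE1 hF1 hEnF h10]
    exact sumA 1 2
  have gEE : S e e = 2*((m - 1)*2) + (m - 2)*(1 + (m - 2)*2) := by
    rw [hS]
    simp only [o, e, f, distEE E F hE hF hEF hE0 hF0 hE1 hF1 hEnF h10]
    exact sumB hsq hne 2
  have gFF : S f f = 2*((m - 1)*2) + (m - 2)*(1 + (m - 2)*2) := by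
    rw [hS]
    simp only [o, e, f, distFF E F hE hF hEF hE0 hF0 hE1 hF1 hEnF h10]
    exact sumB hsq hne 2
  have g11 : S o o = 2*((m - 1)*3) + (m - 2)*(1 + (m - 2)*3) := by
    rw [hS]
    simp only [o, e, f, dist11 E F hE hF hEF hE0 hF0 hE1 hF1 hEnF h10]
    exact sumB hsq hne 3
  rw [g11, g1E, g1F, gE1, gEE, gEF, gF1, gFE, gFF]
  have hm2 : 2 ≤ m := by
    have : Nontrivial Rˣ := by
      refine ⟨⟨1, -1, fun h => hne ?_⟩⟩
      simpa using congrArg (Units.val) h.symm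
    exact Fintype.one_lt_card
  obtain ⟨t, ht⟩ : ∃ t, m = t + 2 := ⟨m - 2, by omega⟩
  rw [ht]
  rw [show t+2-1 = t+1 from by omega, Nat.add_sub_cancel,
    show (t+2)*(t+2)-(t+2) = (t+2)*(t+1) from by
      rw [show (t+2)*(t+2) = (t+2)*(t+1) + (t+2) from by ring, Nat.add_sub_cancel],
    show 17*((t+2)*(t+2)) = 15*(t+2)+(17*(t*t)+53*t+38) from by ring,
    Nat.add_sub_cancel_left]
  ring

end Sums
end Master


lemma pp_dvd_core {p : ℕ} (hp : p.Prime) (α : ℕ) {a b : ℤ}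
    (hnot : ¬ ((p:ℤ) ∣ a ∧ (p:ℤ) ∣ b)) (h : ((p:ℤ)^α) ∣ a * b) :
    ((p:ℤ)^α) ∣ a ∨ ((p:ℤ)^α) ∣ b := by
  have hpI : Prime (p : ℤ) := Nat.prime_iff_prime_int.mp hp
  by_cases hpa : (p:ℤ) ∣ a
  · have hpb : ¬ (p:ℤ) ∣ b := fun hb => hnot ⟨hpa, hb⟩
    left
    have hco : IsCoprime ((p:ℤ)^α) b := (hpI.coprime_iff_not_dvd.mpr hpb).pow_left
    exact hco.dvd_of_dvd_mul_right h
  · right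
    have hco : IsCoprime ((p:ℤ)^α) a := (hpI.coprime_iff_not_dvd.mpr hpa).pow_left
    exact hco.dvd_of_dvd_mul_left h

lemma pp_idem {p : ℕ} (hp : p.Prime) (α : ℕ) (b : ZMod (p^α)) (h : b*b = b) :
    b = 0 ∨ b = 1 := by
  obtain ⟨a, rfl⟩ := ZMod.intCast_surjective b
  have hz : ((a * (a - 1) : ℤ) : ZMod (p^α)) = 0 := by
    push_cast
    ring_nf
    linear_combination h
  rw [ZMod.intCast_zmod_eq_zero_iff_dvd] at hz
  push_cast at hz
  have hnot : ¬ ((p:ℤ) ∣ a ∧ (p:ℤ) ∣ (a - 1)) := by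
    rintro ⟨h1, h2⟩
    have : (p:ℤ) ∣ 1 := by
      have := dvd_sub h1 h2
      simpa using this
    have := Int.le_of_dvd one_pos this
    have h2 := hp.two_le
    omega
  rcases pp_dvd_core hp α hnot hz with hd | hd
  · left
    exact (ZMod.intCast_zmod_eq_zero_iff_dvd a (p^α)).mpr (by push_cast; exact hd)
  · right
    have h0 : ((a - 1 : ℤ) : ZMod (p^α)) = 0 :=
      (ZMod.intCast_zmod_eq_zero_iff_dvd _ (p^α)).mpr (by push_cast; exact hd)
    push_cast at h0
    exact sub_eq_zero.mp h0

lemma pp_sq {p : ℕ} (hp : p.Prime) (hp2 : p ≠ 2) (α : ℕ) (b : ZMod (p^α)) (h : b*b = 1) :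
    b = 1 ∨ b = -1 := by
  obtain ⟨a, rfl⟩ := ZMod.intCast_surjective b
  have hz : (((a - 1) * (a + 1) : ℤ) : ZMod (p^α)) = 0 := by
    push_cast
    ring_nf
    linear_combination h
  rw [ZMod.intCast_zmod_eq_zero_iff_dvd] at hz
  push_cast at hz
  have hnot : ¬ ((p:ℤ) ∣ (a-1) ∧ (p:ℤ) ∣ (a+1)) := by
    rintro ⟨h1, h2⟩
    have : (p:ℤ) ∣ 2 := by
      have := dvd_sub h2 h1
      simpa using this
    have := Int.le_of_dvd two_pos this
    have h2 := hp.two_le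
    omega
  rcases pp_dvd_core hp α hnot hz with hd | hd
  · left
    have h0 : ((a - 1 : ℤ) : ZMod (p^α)) = 0 :=
      (ZMod.intCast_zmod_eq_zero_iff_dvd _ (p^α)).mpr (by push_cast; exact hd)
    push_cast at h0
    exact sub_eq_zero.mp h0
  · right
    have h0 : ((a + 1 : ℤ) : ZMod (p^α)) = 0 :=
      (ZMod.intCast_zmod_eq_zero_iff_dvd _ (p^α)).mpr (by push_cast; exact hd)
    push_cast at h0
    exact eq_neg_of_add_eq_zero_left h0


theorem wiener_index_two_mul_prime_pow (p α : ℕ) (hp : p.Prime) (hpodd : p ≠ 2)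
    (hα : 1 ≤ α) :
    wienerIndex (cleanGraph (ZMod (2 * p ^ α))) =
      (17 * (2 * p ^ α).totient ^ 2 - 15 * (2 * p ^ α).totient + 8) / 2 := by
  classical
  have hp2 := hp.two_le
  have hp3 : 3 ≤ p := by rcases Nat.lt_or_ge p 3 with h | h; · interval_cases p <;> simp_all
                         · exact h
  have hpa : p ≤ p ^ α := Nat.le_self_pow (by omega) p
  have hpa3 : 3 ≤ p ^ α := le_trans hp3 hpa
  haveI : NeZero (2 * p ^ α) := ⟨by positivity⟩
  haveI : NeZero (p ^ α) := ⟨by omega⟩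
  haveI : Fact (1 < p ^ α) := ⟨by omega⟩
  haveI : Fact (1 < 2 * p ^ α) := ⟨by omega⟩
  have hco : Nat.Coprime 2 (p ^ α) :=
    ((Nat.coprime_primes Nat.prime_two hp).mpr (Ne.symm hpodd)).pow_right α
  let ψ : ZMod (2 * p ^ α) ≃+* ZMod 2 × ZMod (p ^ α) := ZMod.chineseRemainder hco
  have hone2 : (1 : ZMod 2) ≠ 0 := by decide
  have honeP : (1 : ZMod (p ^ α)) ≠ 0 := one_ne_zero
  set E : ZMod (2 * p ^ α) := ψ.symm (1, 0) with hEdef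
  set F : ZMod (2 * p ^ α) := ψ.symm (0, 1) with hFdef
  have hψE : ψ E = (1, 0) := ψ.apply_symm_apply _
  have hψF : ψ F = (0, 1) := ψ.apply_symm_apply _
  have hE : E * E = E := by
    rw [hEdef, ← map_mul]
    norm_num
  have hF : F * F = F := by
    rw [hFdef, ← map_mul]
    norm_num
  have hEF : E * F = 0 := by
    rw [hEdef, hFdef, ← map_mul]
    rw [show ((1 : ZMod 2), (0 : ZMod (p ^ α))) * (0, 1) = 0 from by
      rw [Prod.mk_mul_mk]; norm_num]
    exact map_zero _
  have hE0 : E ≠ 0 := by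
    intro h
    have := congrArg ψ h
    rw [hψE, map_zero] at this
    exact hone2 (congrArg Prod.fst this)
  have hF0 : F ≠ 0 := by
    intro h
    have := congrArg ψ h
    rw [hψF, map_zero] at this
    exact honeP (congrArg Prod.snd this)
  have hE1 : E ≠ 1 := by
    intro h
    have := congrArg ψ h
    rw [hψE, map_one] at this
    exact honeP (congrArg Prod.snd this).symm
  have hF1 : F ≠ 1 := by
    intro h
    have := congrArg ψ h
    rw [hψF, map_one] at this
    exact hone2 (congrArg Prod.fst this).symm
  have hEnF : E ≠ F := by
    intro h
    have := congrArg ψ h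
    rw [hψE, hψF] at this
    exact hone2 (congrArg Prod.fst this)
  have h10 : (1 : ZMod (2 * p ^ α)) ≠ 0 := one_ne_zero
  have hidem : ∀ e : ZMod (2 * p ^ α), e * e = e → e = 0 ∨ e = 1 ∨ e = E ∨ e = F := by
    intro e he
    have h1 : (ψ e).1 * (ψ e).1 = (ψ e).1 := by
      have := congrArg ψ he
      rw [map_mul] at this
      exact congrArg Prod.fst this
    have h2 : (ψ e).2 * (ψ e).2 = (ψ e).2 := by
      have := congrArg ψ he
      rw [map_mul] at this
      exact congrArg Prod.snd this
    have hall : ∀ x : ZMod 2, x * x = x → x = 0 ∨ x = 1 := by decide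
    have hc1 : (ψ e).1 = 0 ∨ (ψ e).1 = 1 := hall _ h1
    have hc2 : (ψ e).2 = 0 ∨ (ψ e).2 = 1 := pp_idem hp α _ h2
    have hsurj : e = ψ.symm (ψ e) := (ψ.symm_apply_apply e).symm
    rcases hc1 with h1' | h1' <;> rcases hc2 with h2' | h2'
    · left
      rw [hsurj, show (ψ e) = ((0 : ZMod 2), (0 : ZMod (p ^ α))) from Prod.ext h1' h2']
      exact map_zero _
    · right; right; right
      rw [hsurj, show (ψ e) = ((0 : ZMod 2), (1 : ZMod (p ^ α))) from Prod.ext h1' h2', hFdef]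
    · right; right; left
      rw [hsurj, show (ψ e) = ((1 : ZMod 2), (0 : ZMod (p ^ α))) from Prod.ext h1' h2', hEdef]
    · right; left
      rw [hsurj, show (ψ e) = ((1 : ZMod 2), (1 : ZMod (p ^ α))) from Prod.ext h1' h2']
      rw [show ((1 : ZMod 2), (1 : ZMod (p ^ α))) = 1 from rfl]
      exact map_one _
  have hsq : ∀ u : (ZMod (2 * p ^ α))ˣ,
      (u : ZMod (2 * p ^ α)) * (u : ZMod (2 * p ^ α)) = 1 →
        (u : ZMod (2 * p ^ α)) = 1 ∨ (u : ZMod (2 * p ^ α)) = -1 := by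
    intro u hu
    set x : ZMod (2 * p ^ α) := (u : ZMod (2 * p ^ α)) with hx
    have h1 : (ψ x).1 * (ψ x).1 = 1 := by
      have := congrArg ψ hu
      rw [map_mul, map_one] at this
      exact congrArg Prod.fst this
    have h2 : (ψ x).2 * (ψ x).2 = 1 := by
      have := congrArg ψ hu
      rw [map_mul, map_one] at this
      exact congrArg Prod.snd this
    have hall : ∀ y : ZMod 2, y * y = 1 → y = 1 := by decide
    have hc1 : (ψ x).1 = 1 := hall _ h1
    have hc2 : (ψ x).2 = 1 ∨ (ψ x).2 = -1 := pp_sq hp hpodd α _ h2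
    have hsurj : x = ψ.symm (ψ x) := (ψ.symm_apply_apply x).symm
    rcases hc2 with h2' | h2'
    · left
      rw [hsurj, show (ψ x) = ((1 : ZMod 2), (1 : ZMod (p ^ α))) from Prod.ext hc1 h2']
      rw [show ((1 : ZMod 2), (1 : ZMod (p ^ α))) = 1 from rfl]
      exact map_one _
    · right
      rw [hsurj, show (ψ x) = ((1 : ZMod 2), (-1 : ZMod (p ^ α))) from Prod.ext hc1 h2']
      rw [show ((1 : ZMod 2), (-1 : ZMod (p ^ α))) = -1 from by
        rw [show ((1 : ZMod 2)) = -1 from by decide]; rfl]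
      rw [map_neg, map_one]
  have hne : (-1 : ZMod (2 * p ^ α)) ≠ 1 := by
    intro h
    have := congrArg ψ h
    rw [map_neg, map_one] at this
    have h2 : (-1 : ZMod (p ^ α)) = 1 := congrArg Prod.snd this
    have h3 : ((2 : ℕ) : ZMod (p ^ α)) = 0 := by
      push_cast
      linear_combination - h2
    rw [ZMod.natCast_eq_zero_iff] at h3
    have := Nat.le_of_dvd (by norm_num) h3
    omega
  unfold wienerIndex
  rw [masterSum E F hE hF hEF hE0 hF0 hE1 hF1 hEnF h10 hidem hsq hne]
  rw [ZMod.card_units_eq_totient (2 * p ^ α)]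
  rw [pow_two]
end

section
/- Let n have k ≥ 2 distinct prime factors. Then Cl₂(ZMod n) contains a perfect matching, and its matching number equals φ(n)·(2^k − 1)/2. -/
set_option linter.unusedSectionVars false


open SimpleGraph Finset

lemma matching_two_mul_ncard {V : Type*} [Fintype V] {G : SimpleGraph V}
    {M : G.Subgraph} (h : M.IsMatching) : 2 * M.edgeSet.ncard = M.verts.ncard := by
  classical
  rw [Subgraph.isMatching_iff_forall_degree] at h
  have key : M.verts.toFinset.card = 2 * M.coe.edgeFinset.card := by
    rw [← M.coe.sum_degrees_eq_twice_card_edges]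
    convert_to _ = Finset.sum Finset.univ fun v => SimpleGraph.degree (Subgraph.coe M) v using 3
    have hd : ∀ x : M.verts, M.coe.degree x = 1 := by
      intro x
      rw [Subgraph.coe_degree]
      convert h x.1 x.2 using 2
    rw [Finset.sum_congr rfl (fun x _ => hd x), Finset.sum_const, smul_eq_mul, mul_one,
      Finset.card_univ, Set.toFinset_card]
  have h1 : M.edgeSet.ncard = M.coe.edgeFinset.card := by
    rw [← M.image_coe_edgeSet_coe]
    rw [Set.ncard_image_of_injective _ (Sym2.map.injective Subtype.val_injective)]
    simp [SimpleGraph.edgeFinset, Set.ncard_eq_toFinset_card']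
  have h2 : M.verts.ncard = M.verts.toFinset.card := by
    rw [Set.ncard_eq_toFinset_card']
  omega

lemma matchingNumber_eq_of_perfect {V : Type*} [Fintype V] {G : SimpleGraph V}
    {M : G.Subgraph} (hM : M.IsPerfectMatching) :
    matchingNumber G = Fintype.card V / 2 := by
  classical
  have hub : ∀ k ∈ {k | ∃ M : G.Subgraph, M.IsMatching ∧ M.edgeSet.ncard = k},
      k ≤ Fintype.card V / 2 := by
    rintro k ⟨N, hN, rfl⟩
    have := matching_two_mul_ncard hN
    have hle : N.verts.ncard ≤ Fintype.card V := by
      simpa [Set.ncard_univ, Nat.card_eq_fintype_card] using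
        Set.ncard_le_ncard (Set.subset_univ N.verts) (Set.finite_univ)
    omega
  have hmem : Fintype.card V / 2 ∈
      {k | ∃ M : G.Subgraph, M.IsMatching ∧ M.edgeSet.ncard = k} := by
    refine ⟨M, hM.1, ?_⟩
    have := matching_two_mul_ncard hM.1
    rw [hM.2.verts_eq_univ] at this
    simp only [Set.ncard_univ, Nat.card_eq_fintype_card] at this
    omega
  exact le_antisymm (csSup_le ⟨_, hmem⟩ hub) (le_csSup ⟨_, hub⟩ hmem)


lemma Prime.nat_prime' {p : ℕ} (hp : Prime p) : Nat.Prime p := Nat.prime_iff.mpr hp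

lemma zmod_primePow_idem (p a : ℕ) (hp : p.Prime) (e : ZMod (p ^ a)) (he : e * e = e) :
    e = 0 ∨ e = 1 := by
  rcases Nat.eq_zero_or_pos a with ha | ha
  · subst ha
    left
    haveI : Subsingleton (ZMod (p ^ 0)) := by rw [pow_zero]; infer_instance
    exact Subsingleton.elim _ _
  haveI : Fact p.Prime := ⟨hp⟩
  haveI : NeZero (p ^ a) := ⟨pow_ne_zero _ hp.pos.ne'⟩
  set f : ZMod (p ^ a) →+* ZMod p := ZMod.castHom (dvd_pow_self p ha.ne') (ZMod p) with hf
  have key : ∀ x : ZMod (p ^ a), x * x = x → f x = 0 → x = 0 := by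
    intro x hx hfx
    have hcast : ((x.val : ℕ) : ZMod p) = 0 := by
      have : f x = ((x.val : ℕ) : ZMod p) := by
        rw [ZMod.castHom_apply, ← ZMod.natCast_val]
      rwa [this] at hfx
    obtain ⟨t, ht⟩ := (ZMod.natCast_eq_zero_iff _ _).mp hcast
    have hx' : x = (p : ZMod (p ^ a)) * (t : ZMod (p ^ a)) := by
      have := ZMod.natCast_val (R := ZMod (p ^ a)) x
      rw [ZMod.cast_id] at this
      rw [← this, ht]; push_cast; ring
    have hpow : x ^ a = x := by
      have := (IsIdempotentElem.pow_succ_eq (a - 1) (show IsIdempotentElem x from hx))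
      rwa [Nat.sub_add_cancel ha] at this
    rw [← hpow, hx', mul_pow, ← Nat.cast_pow, ZMod.natCast_self, zero_mul]
  have hfe : f e * f e = f e := by rw [← map_mul, he]
  rcases IsIdempotentElem.iff_eq_zero_or_one.mp hfe with h0 | h1
  · exact Or.inl (key e he h0)
  · right
    have h1e : (1 - e) * (1 - e) = 1 - e := by linear_combination he
    have : f (1 - e) = 0 := by rw [map_sub, map_one, h1, sub_self]
    have := key _ h1e this
    rw [sub_eq_zero] at this
    exact this.symm

lemma card_idem_zmod : ∀ n : ℕ, 0 < n →
    Nat.card {e : ZMod n // e * e = e} = 2 ^ n.primeFactors.card := by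
  refine Nat.recOnPrimeCoprime (by simp) ?_ ?_
  · intro p a hp _
    rcases Nat.eq_zero_or_pos a with ha | ha
    · subst ha
      simp only [pow_zero, Nat.primeFactors_one, Finset.card_empty]
      haveI : Subsingleton (ZMod (p ^ 0)) := by rw [pow_zero]; infer_instance
      rw [Nat.card_eq_one_iff_unique]
      constructor
      · exact ⟨fun x y => Subtype.ext (Subsingleton.elim _ _)⟩
      · exact ⟨⟨0, by rw [mul_zero]⟩⟩
    · haveI : Fact p.Prime := ⟨hp⟩
      haveI : Fact (1 < p ^ a) := ⟨Nat.one_lt_pow ha.ne' hp.one_lt⟩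
      have hB : {e : ZMod (p ^ a) // e * e = e} ≃ Bool :=
        { toFun := fun e => decide (e.1 = 1)
          invFun := fun b => if b then ⟨1, by rw [mul_one]⟩ else ⟨0, by rw [mul_zero]⟩
          left_inv := by
            rintro ⟨e, he⟩
            rcases zmod_primePow_idem p a hp e he with h | h <;> subst h <;> simp
          right_inv := by
            rintro (_|_) <;> simp }
      rw [Nat.card_congr hB, Nat.card_eq_fintype_card, Fintype.card_bool,
        Nat.primeFactors_prime_pow ha.ne' hp, Finset.card_singleton, pow_one]
  · intro a b ha hb hco IHa IHb _
    have hE := ZMod.chineseRemainder hco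
    have e1 : {e : ZMod (a * b) // e * e = e} ≃
        {x : ZMod a × ZMod b // x * x = x} :=
      hE.toEquiv.subtypeEquiv (by
        intro e
        show e * e = e ↔ hE e * hE e = hE e
        constructor
        · intro h; rw [← map_mul, h]
        · intro h; apply hE.injective; rw [map_mul]; exact h)
    have e2 : {x : ZMod a × ZMod b // x * x = x} ≃
        {x : ZMod a × ZMod b // x.1 * x.1 = x.1 ∧ x.2 * x.2 = x.2} :=
      Equiv.subtypeEquivRight (by intro x; simp [Prod.ext_iff])
    have e3 := Equiv.subtypeProdEquivProd
      (p := fun x : ZMod a => x * x = x) (q := fun x : ZMod b => x * x = x)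
    rw [Nat.card_congr ((e1.trans e2).trans e3), Nat.card_prod,
      IHa (by omega), IHb (by omega), hco.primeFactors_mul,
      Finset.card_union_of_disjoint (Nat.Coprime.disjoint_primeFactors hco), pow_add]

namespace CleanAux

variable {n : ℕ} [NeZero n]

/-- `u` is the designated "low" element of the pair `{u, -u}`. -/
def lowu (u : (ZMod n)ˣ) : Prop :=
  (u : ZMod n).val < ((-u : (ZMod n)ˣ) : ZMod n).val

instance : DecidablePred (lowu (n := n)) := fun _ => Nat.decLt _ _

/-- leftover idempotent of the column of an involution `u` -/
def epsF (e₀ : ZMod n) (u : (ZMod n)ˣ) : ZMod n := if lowu u then e₀ else 1 - e₀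

/-- within-column pairing of idempotents avoiding `ε` -/
def piF (ε e : ZMod n) : ZMod n :=
  if e = 1 then 1 - ε else if e = 1 - ε then 1 else 1 - e

lemma one_ne_zero' (h2 : (2 : ZMod n) ≠ 0) : (1 : ZMod n) ≠ 0 := fun h =>
  h2 (by rw [show (2 : ZMod n) = 2 * 1 by ring, h, mul_zero])

lemma neg_unit_ne (h2 : (2 : ZMod n) ≠ 0) (u : (ZMod n)ˣ) : -u ≠ u := by
  intro hequ
  have hval : -(u : ZMod n) = (u : ZMod n) := by
    rw [← Units.val_neg, hequ]
  have h2u : (2 : ZMod n) * (u : ZMod n) = 0 := by linear_combination -hval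
  have : (2 : ZMod n) = (2 * (u : ZMod n)) * ((u⁻¹ : (ZMod n)ˣ) : ZMod n) := by
    rw [mul_assoc, Units.mul_inv, mul_one]
  rw [h2u, zero_mul] at this
  exact h2 this

lemma lowu_neg_iff (h2 : (2 : ZMod n) ≠ 0) (u : (ZMod n)ˣ) : lowu (-u) ↔ ¬ lowu u := by
  have hne : ((-u : (ZMod n)ˣ) : ZMod n) ≠ (u : ZMod n) := by
    intro hc
    exact neg_unit_ne h2 u (Units.ext hc)
  have hval : ((-u : (ZMod n)ˣ) : ZMod n).val ≠ ((u : (ZMod n)ˣ) : ZMod n).val :=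
    fun hc => hne (ZMod.val_injective n hc)
  unfold lowu
  rw [neg_neg]
  omega

lemma epsF_spec {e₀ : ZMod n} (he₀ : e₀ * e₀ = e₀) (h0 : e₀ ≠ 0) (h1 : e₀ ≠ 1)
    (u : (ZMod n)ˣ) :
    epsF e₀ u * epsF e₀ u = epsF e₀ u ∧ epsF e₀ u ≠ 0 ∧ epsF e₀ u ≠ 1 := by
  unfold epsF
  split_ifs
  · exact ⟨he₀, h0, h1⟩
  · refine ⟨by linear_combination he₀, ?_, ?_⟩
    · intro hc; exact h1 (by linear_combination -hc)
    · intro hc; exact h0 (by linear_combination -hc)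

lemma epsF_neg (h2 : (2 : ZMod n) ≠ 0) {e₀ : ZMod n} (u : (ZMod n)ˣ) :
    epsF e₀ (-u) = 1 - epsF e₀ u := by
  unfold epsF
  rcases Classical.em (lowu u) with hl | hl
  · rw [if_pos hl, if_neg (by rw [lowu_neg_iff h2]; exact fun hc => hc hl)]
  · rw [if_neg hl, if_pos ((lowu_neg_iff h2 u).mpr hl), sub_sub_cancel]

lemma idem_ne_one_sub_self (h2 : (2 : ZMod n) ≠ 0) {e : ZMod n} (he : e * e = e) :
    e ≠ 1 - e := by
  intro hc
  have he0 : e = 0 := by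
    have h' : e * e = e * (1 - e) := by rw [← hc]
    rw [he] at h'
    linear_combination h' - he
  rw [he0, sub_zero] at hc
  exact one_ne_zero' h2 hc.symm

lemma piF_spec (h2 : (2 : ZMod n) ≠ 0) {ε : ZMod n}
    (hεi : ε * ε = ε) (hε0 : ε ≠ 0) (hε1 : ε ≠ 1)
    {e : ZMod n} (he : e * e = e) (he0 : e ≠ 0) (hne : e ≠ ε) :
    (piF ε e * piF ε e = piF ε e ∧ piF ε e ≠ 0) ∧ piF ε e ≠ ε ∧ piF ε e ≠ e ∧
      piF ε (piF ε e) = e := by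
  unfold piF
  by_cases h1e : e = 1
  · rw [if_pos h1e]
    have hx0 : (1 : ZMod n) - ε ≠ 0 := fun hc => hε1 (by linear_combination -hc)
    have hx1 : (1 : ZMod n) - ε ≠ 1 := fun hc => hε0 (by linear_combination -hc)
    refine ⟨⟨by linear_combination hεi, hx0⟩, ?_, ?_, ?_⟩
    · intro hc; exact idem_ne_one_sub_self h2 hεi (by linear_combination -hc)
    · rw [h1e]; exact hx1
    · rw [if_neg hx1, if_pos rfl, h1e]
  · rw [if_neg h1e]
    by_cases h1ε : e = 1 - ε
    · rw [if_pos h1ε]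
      refine ⟨⟨by ring, one_ne_zero' h2⟩, fun hc => hε1 hc.symm, ?_, ?_⟩
      · rw [h1ε]; intro hc
        exact hε0 (by linear_combination hc)
      · rw [if_pos rfl, h1ε]
    · rw [if_neg h1ε]
      have k0 : (1 : ZMod n) - e ≠ 1 := fun hc => he0 (by linear_combination -hc)
      have k1 : (1 : ZMod n) - e ≠ 1 - ε := fun hc => hne (by linear_combination -hc)
      refine ⟨⟨by linear_combination he, fun hc => h1e (by linear_combination -hc)⟩,
        ?_, ?_, ?_⟩
      · intro hc; exact h1ε (by linear_combination -hc)
      · exact fun hc => (idem_ne_one_sub_self h2 he) (by linear_combination -hc)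
      · rw [if_neg k0, if_neg k1, sub_sub_cancel]

/-- The perfect-matching involution on vertices. -/
def mfun (h2 : (2 : ZMod n) ≠ 0) {e₀ : ZMod n}
    (he₀ : e₀ * e₀ = e₀) (h0 : e₀ ≠ 0) (h1 : e₀ ≠ 1)
    (v : cleanVertex (ZMod n)) : cleanVertex (ZMod n) :=
  if hu : v.2 * v.2 = 1 then
    if he : v.1.1 = epsF e₀ v.2 then
      (⟨epsF e₀ (-v.2), (epsF_spec he₀ h0 h1 (-v.2)).1,
        (epsF_spec he₀ h0 h1 (-v.2)).2.1⟩, -v.2)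
    else
      (⟨piF (epsF e₀ v.2) v.1.1,
        (piF_spec h2 (epsF_spec he₀ h0 h1 v.2).1 (epsF_spec he₀ h0 h1 v.2).2.1
          (epsF_spec he₀ h0 h1 v.2).2.2 v.1.2.1 v.1.2.2 he).1.1,
        (piF_spec h2 (epsF_spec he₀ h0 h1 v.2).1 (epsF_spec he₀ h0 h1 v.2).2.1
          (epsF_spec he₀ h0 h1 v.2).2.2 v.1.2.1 v.1.2.2 he).1.2⟩, v.2)
  else (v.1, v.2⁻¹)

end CleanAux

namespace CleanAux

variable {n : ℕ} [NeZero n] (h2 : (2 : ZMod n) ≠ 0) {e₀ : ZMod n}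
  (he₀ : e₀ * e₀ = e₀) (h0 : e₀ ≠ 0) (h1 : e₀ ≠ 1)

set_option linter.unusedSectionVars false

lemma unit_coe_mul_self {u : (ZMod n)ˣ} (hu : u * u = 1) :
    (u : ZMod n) * (u : ZMod n) = 1 := by
  rw [← Units.val_mul, hu, Units.val_one]

lemma neg_mul_self_one {u : (ZMod n)ˣ} (hu : u * u = 1) : (-u) * (-u) = 1 := by
  rw [neg_mul_neg]; exact hu

lemma inv_sq_ne_one {u : (ZMod n)ˣ} (hu : ¬ u * u = 1) : ¬ u⁻¹ * u⁻¹ = 1 := by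
  intro hc
  apply hu
  have := congrArg (·⁻¹) hc
  simpa [mul_inv_rev] using this

variable {u : (ZMod n)ˣ}

lemma mfun_case1 (x : {e : ZMod n // e * e = e ∧ e ≠ 0}) (hu : u * u = 1)
    (he : (x : ZMod n) = epsF e₀ u) :
    mfun h2 he₀ h0 h1 (x, u) =
      (⟨epsF e₀ (-u), (epsF_spec he₀ h0 h1 (-u)).1,
        (epsF_spec he₀ h0 h1 (-u)).2.1⟩, -u) := by
  simp only [mfun]
  exact (dif_pos hu).trans (dif_pos he)

lemma mfun_case2 (x : {e : ZMod n // e * e = e ∧ e ≠ 0}) (hu : u * u = 1)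
    (he : ¬ (x : ZMod n) = epsF e₀ u) :
    mfun h2 he₀ h0 h1 (x, u) =
      (⟨piF (epsF e₀ u) (x : ZMod n),
        (piF_spec h2 (epsF_spec he₀ h0 h1 u).1 (epsF_spec he₀ h0 h1 u).2.1
          (epsF_spec he₀ h0 h1 u).2.2 x.2.1 x.2.2 he).1.1,
        (piF_spec h2 (epsF_spec he₀ h0 h1 u).1 (epsF_spec he₀ h0 h1 u).2.1
          (epsF_spec he₀ h0 h1 u).2.2 x.2.1 x.2.2 he).1.2⟩, u) := by
  simp only [mfun]
  exact (dif_pos hu).trans (dif_neg he)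

lemma mfun_case3 (x : {e : ZMod n // e * e = e ∧ e ≠ 0}) (hu : ¬ u * u = 1) :
    mfun h2 he₀ h0 h1 (x, u) = (x, u⁻¹) := by
  simp only [mfun]
  exact dif_neg hu

lemma mfun_invol (v : cleanVertex (ZMod n)) :
    mfun h2 he₀ h0 h1 (mfun h2 he₀ h0 h1 v) = v := by
  obtain ⟨⟨e, hei, he0⟩, u⟩ := v
  by_cases hu : u * u = 1
  · by_cases he : e = epsF e₀ u
    · rw [mfun_case1 h2 he₀ h0 h1 _ hu he,
        mfun_case1 h2 he₀ h0 h1 _ (neg_mul_self_one hu) rfl]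
      refine Prod.ext (Subtype.ext ?_) ?_ <;> simp only [neg_neg]
      exact he.symm
    · have hspec := piF_spec h2 (epsF_spec he₀ h0 h1 u).1 (epsF_spec he₀ h0 h1 u).2.1
        (epsF_spec he₀ h0 h1 u).2.2 hei he0 he
      rw [mfun_case2 h2 he₀ h0 h1 _ hu he, mfun_case2 h2 he₀ h0 h1 _ hu hspec.2.1]
      exact Prod.ext (Subtype.ext hspec.2.2.2) rfl
  · rw [mfun_case3 h2 he₀ h0 h1 _ hu, mfun_case3 h2 he₀ h0 h1 _ (inv_sq_ne_one hu)]
    exact Prod.ext rfl (inv_inv u)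

lemma mfun_adj (v : cleanVertex (ZMod n)) :
    (cleanGraph (ZMod n)).Adj v (mfun h2 he₀ h0 h1 v) := by
  obtain ⟨⟨e, hei, he0⟩, u⟩ := v
  rw [cleanGraph]
  refine (SimpleGraph.fromRel_adj _ _ _).mpr ?_
  by_cases hu : u * u = 1
  · by_cases he : e = epsF e₀ u
    · rw [mfun_case1 h2 he₀ h0 h1 _ hu he]
      constructor
      · intro hc
        exact neg_unit_ne h2 u (congrArg Prod.snd hc).symm
      · left; left
        constructor
        · show e * epsF e₀ (-u) = 0
          rw [epsF_neg h2]
          linear_combination (1 - epsF e₀ u) * he - (epsF_spec he₀ h0 h1 u).1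
        · show epsF e₀ (-u) * e = 0
          rw [epsF_neg h2]
          linear_combination (1 - epsF e₀ u) * he - (epsF_spec he₀ h0 h1 u).1
    · have hspec := piF_spec h2 (epsF_spec he₀ h0 h1 u).1 (epsF_spec he₀ h0 h1 u).2.1
        (epsF_spec he₀ h0 h1 u).2.2 hei he0 he
      rw [mfun_case2 h2 he₀ h0 h1 _ hu he]
      constructor
      · intro hc
        have h' : e = piF (epsF e₀ u) e := Subtype.ext_iff.mp (congrArg Prod.fst hc)
        exact hspec.2.2.1 h'.symm
      · left; right
        exact ⟨unit_coe_mul_self hu, unit_coe_mul_self hu⟩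
  · rw [mfun_case3 h2 he₀ h0 h1 _ hu]
    constructor
    · intro hc
      have hc2 : u = u⁻¹ := congrArg Prod.snd hc
      exact hu (by nth_rewrite 2 [hc2]; exact mul_inv_cancel u)
    · left; right
      exact ⟨Units.mul_inv u, Units.inv_mul u⟩

/-- The perfect matching subgraph. -/
def PM : (cleanGraph (ZMod n)).Subgraph where
  verts := Set.univ
  Adj a b := (cleanGraph (ZMod n)).Adj a b ∧ mfun h2 he₀ h0 h1 a = b
  adj_sub := fun h => h.1
  edge_vert := fun _ => trivial
  symm := by
    constructor
    rintro a b ⟨hadj, rfl⟩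
    exact ⟨hadj.symm, mfun_invol h2 he₀ h0 h1 a⟩

lemma PM_perfect : (PM h2 he₀ h0 h1).IsPerfectMatching :=
  ⟨fun v _ => ⟨mfun h2 he₀ h0 h1 v,
    ⟨mfun_adj h2 he₀ h0 h1 v, rfl⟩, fun w hw => hw.2.symm⟩,
   fun _ => trivial⟩

end CleanAux

lemma card_nonzero_idem (n : ℕ) [NeZero n] :
    Nat.card {e : ZMod n // e * e = e ∧ e ≠ 0} = 2 ^ n.primeFactors.card - 1 := by
  classical
  rw [Nat.card_eq_fintype_card, Fintype.card_subtype]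
  have hfil : Finset.univ.filter (fun e : ZMod n => e * e = e ∧ e ≠ 0) =
      (Finset.univ.filter (fun e : ZMod n => e * e = e)).erase 0 := by
    ext x
    simp only [Finset.mem_filter, Finset.mem_univ, true_and, Finset.mem_erase]
    tauto
  rw [hfil, Finset.card_erase_of_mem (by simp)]
  congr 1
  rw [← Fintype.card_subtype, ← Nat.card_eq_fintype_card,
    card_idem_zmod n (NeZero.pos n)]

lemma exists_nontrivial_idem (n : ℕ) [NeZero n] [Fact (1 < n)]
    (h : 2 ≤ n.primeFactors.card) :
    ∃ e₀ : ZMod n, e₀ * e₀ = e₀ ∧ e₀ ≠ 0 ∧ e₀ ≠ 1 := by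
  by_contra hc
  push_neg at hc
  have key : ∀ e : {e : ZMod n // e * e = e}, e.1 = 0 ∨ e.1 = 1 := by
    intro e
    by_cases h' : e.1 = 0
    · exact Or.inl h'
    · exact Or.inr (hc e.1 e.2 h')
  have hinj : Function.Injective
      (fun e : {e : ZMod n // e * e = e} => decide (e.1 = 1)) := by
    intro a b hab
    rcases key a with ha | ha <;> rcases key b with hb | hb <;>
      apply Subtype.ext <;> rw [ha, hb] <;> simp [ha, hb] at hab <;> tauto
  have hle : Nat.card {e : ZMod n // e * e = e} ≤ 2 := by
    have := Nat.card_le_card_of_injective _ hinj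
    simpa [Nat.card_eq_fintype_card] using this
  rw [card_idem_zmod n (NeZero.pos n)] at hle
  have h4 : (4 : ℕ) ≤ 2 ^ n.primeFactors.card := by
    calc (4 : ℕ) = 2 ^ 2 := rfl
    _ ≤ 2 ^ n.primeFactors.card := Nat.pow_le_pow_right (by norm_num) h
  omega

theorem cleanGraph_perfect_matching (n : ℕ) (h : 2 ≤ n.primeFactors.card) :
    (∃ M : (cleanGraph (ZMod n)).Subgraph, M.IsPerfectMatching) ∧
    matchingNumber (cleanGraph (ZMod n)) =
      n.totient * (2 ^ n.primeFactors.card - 1) / 2 := by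
  have hn0 : n ≠ 0 := by rintro rfl; simp at h
  haveI : NeZero n := ⟨hn0⟩
  have hn3 : 3 ≤ n := by
    by_contra hlt
    push_neg at hlt
    have h1n : 1 ≤ n := Nat.one_le_iff_ne_zero.mpr hn0
    interval_cases n
    · simp [Nat.primeFactors_one] at h
    · rw [Nat.Prime.primeFactors Nat.prime_two] at h
      simp at h
  haveI : Fact (1 < n) := ⟨by omega⟩
  have h2 : (2 : ZMod n) ≠ 0 := by
    intro hz
    have hz' : ((2 : ℕ) : ZMod n) = 0 := by push_cast; exact hz
    have hdvd := (ZMod.natCast_eq_zero_iff 2 n).mp hz'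
    have := Nat.le_of_dvd (by norm_num) hdvd
    omega
  obtain ⟨e₀, he₀, h0, h1⟩ := exists_nontrivial_idem n h
  haveI fV : Fintype (cleanVertex (ZMod n)) := by unfold cleanVertex; infer_instance
  have hPM := CleanAux.PM_perfect h2 he₀ h0 h1
  refine ⟨⟨_, hPM⟩, ?_⟩
  rw [matchingNumber_eq_of_perfect hPM]
  have hcard : Fintype.card (cleanVertex (ZMod n)) =
      (2 ^ n.primeFactors.card - 1) * n.totient := by
    rw [← Nat.card_eq_fintype_card]
    have hrepr : Nat.card (cleanVertex (ZMod n)) =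
        Nat.card ({e : ZMod n // e * e = e ∧ e ≠ 0} × (ZMod n)ˣ) := rfl
    rw [hrepr, Nat.card_prod, card_nonzero_idem n, Nat.card_eq_fintype_card,
      ZMod.card_units_eq_totient]
  rw [hcard, Nat.mul_comm]
end
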